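/- arXiv:2207.11807 — 2 statements merged into one kernel-verified Lean document; each statement's English description precedes it below -/
import Mathlib

section
/- Let f be a 2-periodic function on ℝ that extends to a bounded analytic function in the strip {z : |Im z| < a} with |f| ≤ M there. Then the n-point trapezoidal rule approximation of ∫_{-1}^{1} f(x) dx using equispaced nodes converges exponentially: the error is bounded by 4M/(e^{π a n} − 1) for all n ≥ 1. -/
/-!
Lift `f` to a continuous function on `AddCircle 2`. Shifting the contour of the `k`-th Fourier
coefficient integral to height `∓b` for `b < a` (the vertical sides cancel by periodicity) gives
`|c_k| ≤ M e^{-π a |k|}`, so the Fourier series converges absolutely. The `n`-point rule sums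
`e^{iπkx}` over `n`-th roots of unity, which kills every frequency not divisible by `n`; hence the
error is `-2 ∑_{m ≠ 0} c_{nm} e^{-iπnm}`, bounded by the geometric series
`4M ∑_{m ≥ 1} e^{-π a n m} = 4M / (e^{π a n} - 1)`.
-/

open Real Set Complex Finset intervalIntegral
open scoped Interval

theorem integral_add_mul_I_eq_of_periodic {E : Type*} [NormedAddCommGroup E] [NormedSpace ℂ E]
    [CompleteSpace E] {g : ℂ → E} {T : ℝ} (hper : ∀ z, g (z + T) = g z) (x₀ t : ℝ)
    (hg : DifferentiableOn ℂ g ([[x₀, x₀ + T]] ×ℂ [[0, t]])) :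
    ∫ x in x₀..x₀ + T, g (x + t * I) = ∫ x in x₀..x₀ + T, g x := by
  have hrect := integral_boundary_rect_eq_zero_of_differentiableOn g x₀ (↑(x₀ + T) + t * I)
    (by simpa using hg)
  have hvert : ∫ y in (0 : ℝ)..t, g (x₀ + T + y * I) = ∫ y in (0 : ℝ)..t, g (x₀ + y * I) :=
    integral_congr fun y _ => by rw [← hper (x₀ + y * I)]; ring_nf
  simp only [ofReal_re, ofReal_im, add_re, add_im, mul_re, mul_im, I_re, I_im, ofReal_zero,
    ofReal_add, zero_mul, mul_zero, mul_one, add_zero, zero_add, sub_self, hvert,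
    add_sub_cancel_right] at hrect
  exact (sub_eq_zero.1 hrect).symm

theorem reProdIm_uIcc_subset_strip {a t : ℝ} (ht : |t| < a) (x₀ x₁ : ℝ) :
    [[x₀, x₁]] ×ℂ [[0, t]] ⊆ {z : ℂ | |z.im| < a} := fun z hz => by
  simpa using (abs_sub_left_of_mem_uIcc hz.2).trans_lt (by simpa using ht)

theorem periodic_exp_neg_two_pi_I_int_mul_div {T : ℝ} (hT : T ≠ 0) (k : ℤ) :
    Function.Periodic (fun z : ℂ => exp (-(2 * π * I * k * z / T))) T := fun z => by
  have hshift : -(2 * π * I * k * (z + T) / T) =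
      -(2 * π * I * k * z / T) + (-k : ℤ) * (2 * π * I) := by
    field_simp [hT]
    push_cast
    ring
  simp only [hshift, Complex.exp_add, exp_int_mul_two_pi_mul_I, mul_one]

section FourierCoeff

variable {T : ℝ} [hT : Fact (0 < T)] {f : ℂ → ℂ} {F : AddCircle T → ℂ} {a M : ℝ}

theorem fourierCoeff_eq_integral_exp_mul (hF : ∀ x : ℝ, F x = f x) (k : ℤ) (x₀ : ℝ) :
    fourierCoeff F k = (1 / T : ℂ) * ∫ x in x₀..x₀ + T, exp (-(2 * π * I * k * x / T)) * f x := by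
  rw [fourierCoeff_eq_intervalIntegral F k x₀, real_smul]
  push_cast
  congr 1
  refine integral_congr fun x _ => ?_
  rw [fourier_coe_apply, hF, smul_eq_mul]
  push_cast
  ring_nf

theorem norm_fourierCoeff_le_of_lt (hF : ∀ x : ℝ, F x = f x) (hper : ∀ z, f (z + T) = f z)
    (hdiff : DifferentiableOn ℂ f {z : ℂ | |z.im| < a}) (hbd : ∀ z : ℂ, |z.im| < a → ‖f z‖ ≤ M)
    {b : ℝ} (hb : 0 ≤ b) (hba : b < a) (k : ℤ) :
    ‖fourierCoeff F k‖ ≤ M * Real.exp (-(2 * π * b * |(k : ℝ)| / T)) := by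
  have hT0 : T ≠ 0 := hT.out.ne'
  set g : ℂ → ℂ := fun z => exp (-(2 * π * I * k * z / T)) * f z
  have hgper : ∀ z, g (z + T) = g z := fun z => by
    simp only [g, hper, periodic_exp_neg_two_pi_I_int_mul_div hT0 k z]
  have hgdiff : DifferentiableOn ℂ g {z : ℂ | |z.im| < a} :=
    ((differentiable_id.const_mul _).div_const _).neg.cexp.differentiableOn.mul hdiff
  -- shift towards the half-plane where `exp (-(2π i k z / T))` decays
  obtain ⟨t, ht, hkt⟩ : ∃ t : ℝ, |t| = b ∧ k * t = -(b * |(k : ℝ)|) := by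
    rcases le_or_gt 0 k with hk | hk
    · exact ⟨-b, by simp [abs_of_nonneg hb], by rw [abs_of_nonneg (by exact_mod_cast hk)]; ring⟩
    · exact ⟨b, abs_of_nonneg hb, by rw [abs_of_neg (by exact_mod_cast hk)]; ring⟩
  have hline : ∀ x : ℝ, ‖g (x + t * I)‖ ≤ M * Real.exp (-(2 * π * b * |(k : ℝ)| / T)) := by
    intro x
    have hre : (-(2 * π * I * k * (x + t * I) / T)).re = -(2 * π * b * |(k : ℝ)| / T) := by
      simp only [neg_re, div_re, mul_re, mul_im, re_ofNat, im_ofNat, ofReal_re, ofReal_im,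
        I_re, I_im, intCast_re, intCast_im, add_re, add_im, normSq_ofReal, mul_zero, zero_mul,
        mul_one, sub_zero, add_zero, zero_add, sub_self, zero_sub, neg_mul, zero_div, neg_inj]
      field_simp
      linear_combination -hkt
    rw [norm_mul, norm_exp, hre, mul_comm]
    exact mul_le_mul_of_nonneg_right (hbd _ (by simpa [ht] using hba)) (Real.exp_nonneg _)
  rw [fourierCoeff_eq_integral_exp_mul hF k 0, ← integral_add_mul_I_eq_of_periodic hgper 0 t
    (hgdiff.mono (reProdIm_uIcc_subset_strip (ht ▸ hba) _ _))]
  calc _ ≤ ‖(1 / T : ℂ)‖ * (M * Real.exp (-(2 * π * b * |(k : ℝ)| / T)) * |0 + T - 0|) := by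
        rw [norm_mul]
        gcongr
        exact norm_integral_le_of_norm_le_const fun x _ => hline x
    _ = _ := by
        simp only [one_div, norm_inv, norm_real, norm_eq_abs, abs_of_pos hT.out, zero_add, sub_zero]
        field_simp

theorem norm_fourierCoeff_le (hF : ∀ x : ℝ, F x = f x) (hper : ∀ z, f (z + T) = f z)
    (hdiff : DifferentiableOn ℂ f {z : ℂ | |z.im| < a}) (hbd : ∀ z : ℂ, |z.im| < a → ‖f z‖ ≤ M)
    (ha : 0 < a) (k : ℤ) :
    ‖fourierCoeff F k‖ ≤ M * Real.exp (-(2 * π * a * |(k : ℝ)| / T)) := by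
  have hcont : Continuous fun b : ℝ => M * Real.exp (-(2 * π * b * |(k : ℝ)| / T)) := by fun_prop
  refine ge_of_tendsto ((hcont.tendsto a).mono_left (nhdsWithin_le_nhds (s := Iio a))) ?_
  filter_upwards [Ioo_mem_nhdsLT ha] with b hb
  exact norm_fourierCoeff_le_of_lt hF hper hdiff hbd hb.1.le hb.2 k

end FourierCoeff

section Geometric

theorem hasSum_mul_pow_succ {C r : ℝ} (hr0 : 0 ≤ r) (hr1 : r < 1) :
    HasSum (fun n : ℕ => C * r ^ (n + 1)) (C * r / (1 - r)) := by
  have h := (hasSum_geometric_of_lt_one hr0 hr1).mul_left (C * r)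
  simpa only [← div_eq_mul_inv, mul_assoc, ← pow_succ'] using h

variable {E : Type*} [NormedAddCommGroup E] [CompleteSpace E] {s : ℤ → E} {C r : ℝ}

theorem summable_int_of_norm_le_geometric (hr0 : 0 ≤ r) (hr1 : r < 1)
    (hs : ∀ m, ‖s m‖ ≤ C * r ^ m.natAbs) : Summable s := by
  have hgeom := summable_geometric_of_lt_one hr0 hr1
  exact .of_norm_bounded ((Summable.of_nat_of_neg (by simpa using hgeom)
    (by simpa using hgeom)).mul_left C) hs

theorem norm_tsum_sub_apply_zero_le_of_norm_le_geometric (hr0 : 0 ≤ r) (hr1 : r < 1)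
    (hs : ∀ m, ‖s m‖ ≤ C * r ^ m.natAbs) : ‖∑' m, s m - s 0‖ ≤ 2 * (C * r / (1 - r)) := by
  have hgeom := hasSum_mul_pow_succ (C := C) hr0 hr1
  have hpos : ∀ n : ℕ, ‖s (n + 1)‖ ≤ C * r ^ (n + 1) := fun n => by
    have := hs ((n + 1 : ℕ) : ℤ)
    rwa [Int.natAbs_natCast, Nat.cast_succ] at this
  have hneg : ∀ n : ℕ, ‖s (-(n + 1))‖ ≤ C * r ^ (n + 1) := fun n => by
    have := hs (-((n + 1 : ℕ) : ℤ))
    rwa [Int.natAbs_neg, Int.natAbs_natCast, Nat.cast_succ] at this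
  rw [tsum_of_add_one_of_neg_add_one (.of_norm_bounded hgeom.summable hpos)
    (.of_norm_bounded hgeom.summable hneg), add_right_comm, add_sub_cancel_right, two_mul]
  exact (norm_add_le _ _).trans
    (add_le_add (tsum_of_norm_bounded hgeom hpos) (tsum_of_norm_bounded hgeom hneg))

end Geometric

section Aliasing

variable {T : ℝ} [hT : Fact (0 < T)]

theorem sum_range_fourier_mul_period_div (k : ℤ) {n : ℕ} (hn : n ≠ 0) :
    ∑ j ∈ range n, fourier k ((j * (T / n) : ℝ) : AddCircle T) =
      if (n : ℤ) ∣ k then (n : ℂ) else 0 := by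
  have hζ := isPrimitiveRoot_exp n hn
  set ζ := exp (2 * π * I / n)
  have hterm : ∀ j : ℕ, fourier k ((j * (T / n) : ℝ) : AddCircle T) = (ζ ^ k) ^ j := fun j => by
    have hT0 : (T : ℂ) ≠ 0 := ofReal_ne_zero.2 hT.out.ne'
    rw [fourier_coe_apply, ← exp_int_mul, ← Complex.exp_nat_mul]
    congr 1
    push_cast
    field_simp
  simp_rw [hterm]
  split_ifs with hdvd
  · simp [(hζ.zpow_eq_one_iff_dvd k).2 hdvd]
  · have hne : ζ ^ k ≠ 1 := mt (hζ.zpow_eq_one_iff_dvd k).1 hdvd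
    rw [geom_sum_eq hne, ← zpow_natCast, ← zpow_mul, mul_comm, zpow_mul, zpow_natCast,
      hζ.pow_eq_one, one_zpow, sub_self, zero_div]

theorem sum_range_add_eq_mul_tsum_fourierCoeff (F : C(AddCircle T, ℂ))
    (hF : Summable (fourierCoeff F)) (x : AddCircle T) {n : ℕ} (hn : n ≠ 0) :
    ∑ j ∈ range n, F (x + ((j * (T / n) : ℝ) : AddCircle T)) =
      n * ∑' m : ℤ, fourierCoeff F (n * m) * fourier (n * m) x := by
  have hF' := has_pointwise_sum_fourier_series_of_summable hF
  have hinj : Function.Injective fun m : ℤ => (n : ℤ) * m :=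
    mul_right_injective₀ (Int.natCast_ne_zero.2 hn)
  calc ∑ j ∈ range n, F (x + ((j * (T / n) : ℝ) : AddCircle T))
      = ∑ j ∈ range n, ∑' k : ℤ,
          fourierCoeff F k • fourier k (x + ((j * (T / n) : ℝ) : AddCircle T)) :=
        sum_congr rfl fun j _ => (hF' _).tsum_eq.symm
    _ = ∑' k : ℤ, ∑ j ∈ range n,
          fourierCoeff F k • fourier k (x + ((j * (T / n) : ℝ) : AddCircle T)) :=
        (Summable.tsum_finsetSum fun j _ => (hF' _).summable).symm
    _ = ∑' k : ℤ, fourierCoeff F k * fourier k x * if (n : ℤ) ∣ k then (n : ℂ) else 0 := by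
        refine tsum_congr fun k => ?_
        rw [← sum_range_fourier_mul_period_div (T := T) k hn, mul_sum]
        refine sum_congr rfl fun j _ => ?_
        rw [smul_eq_mul, fourier_apply, fourier_apply, fourier_apply, smul_add,
          AddCircle.toCircle_add, Circle.coe_mul, mul_assoc]
    _ = ∑' m : ℤ, fourierCoeff F (n * m) * fourier (n * m) x * n := by
        rw [← hinj.tsum_eq]
        · simp
        · intro k hk
          by_cases hdvd : (n : ℤ) ∣ k
          · exact hdvd.imp fun m hm => hm.symm
          · simp [hdvd] at hk
    _ = _ := by rw [tsum_mul_right, mul_comm]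

theorem norm_integral_sub_trapezoid_le_of_norm_fourierCoeff_le (F : C(AddCircle T, ℂ))
    {M ρ : ℝ} (hρ0 : 0 ≤ ρ) (hρ1 : ρ < 1) (hF : ∀ k : ℤ, ‖fourierCoeff F k‖ ≤ M * ρ ^ k.natAbs)
    (x₀ : ℝ) {n : ℕ} (hn : n ≠ 0) :
    ‖(∫ x in x₀..x₀ + T, F x) - (T / n : ℂ) * ∑ j ∈ range n, F ↑(x₀ + j * (T / n))‖ ≤
      T * (2 * (M * ρ ^ n / (1 - ρ ^ n))) := by
  set s : ℤ → ℂ := fun m => fourierCoeff F (n * m) * fourier (n * m) (x₀ : AddCircle T)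
  have hs : ∀ m, ‖s m‖ ≤ M * (ρ ^ n) ^ m.natAbs := fun m => by
    rw [norm_mul, fourier_apply, Circle.norm_coe, mul_one, ← pow_mul, ← Int.natAbs_natCast n,
      ← Int.natAbs_mul]
    exact hF _
  have hint : ∫ x in x₀..x₀ + T, F x = T * s 0 := by
    simp [s, fourierCoeff_eq_intervalIntegral F 0 x₀, ofReal_ne_zero.2 hT.out.ne']
  have hsum : ∑ j ∈ range n, F ↑(x₀ + j * (T / n)) = n * ∑' m, s m := by
    rw [← sum_range_add_eq_mul_tsum_fourierCoeff F
      (summable_int_of_norm_le_geometric hρ0 hρ1 hF) x₀ hn]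
    exact sum_congr rfl fun j _ => by rw [← AddCircle.coe_add]
  have herr : (∫ x in x₀..x₀ + T, F x) - (T / n : ℂ) * ∑ j ∈ range n, F ↑(x₀ + j * (T / n)) =
      -(T * (∑' m, s m - s 0)) := by
    rw [hint, hsum]
    field_simp
    ring
  rw [herr, norm_neg, norm_mul, norm_real, Real.norm_of_nonneg hT.out.le]
  exact mul_le_mul_of_nonneg_left (norm_tsum_sub_apply_zero_le_of_norm_le_geometric
    (pow_nonneg hρ0 n) (pow_lt_one₀ hρ0 hρ1 hn) hs) hT.out.le

end Aliasing

theorem norm_integral_sub_trapezoid_le_of_strip {f : ℂ → ℂ} {T a M : ℝ} (hT : 0 < T)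
    (ha : 0 < a) (hper : ∀ z, f (z + T) = f z) (hdiff : DifferentiableOn ℂ f {z : ℂ | |z.im| < a})
    (hbd : ∀ z : ℂ, |z.im| < a → ‖f z‖ ≤ M) (x₀ : ℝ) {n : ℕ} (hn : n ≠ 0) :
    ‖(∫ x in x₀..x₀ + T, f x) - (T / n : ℂ) * ∑ j ∈ range n, f ↑(x₀ + j * (T / n))‖ ≤
      2 * T * M / (Real.exp (2 * π * a * n / T) - 1) := by
  have : Fact (0 < T) := ⟨hT⟩
  have hfper : Function.Periodic (fun x : ℝ => f x) T := fun x => by simpa using hper x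
  have hfcont : Continuous fun x : ℝ => f x :=
    hdiff.continuousOn.comp_continuous continuous_ofReal fun x => by simpa using ha
  let F : C(AddCircle T, ℂ) := ⟨hfper.lift, continuous_coinduced_dom.mpr hfcont⟩
  have hF : ∀ x : ℝ, F x = f x := hfper.lift_coe
  set ρ := Real.exp (-(2 * π * a / T))
  have hcoeff : ∀ k : ℤ, ‖fourierCoeff F k‖ ≤ M * ρ ^ k.natAbs := fun k => by
    rw [← Real.exp_nat_mul]
    convert norm_fourierCoeff_le hF hper hdiff hbd ha k using 3
    rw [Nat.cast_natAbs, Int.cast_abs]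
    ring
  have h := norm_integral_sub_trapezoid_le_of_norm_fourierCoeff_le F (Real.exp_nonneg _)
    (Real.exp_lt_one_iff.2 (neg_lt_zero.2 (by positivity))) hcoeff x₀ hn
  simp only [hF] at h
  have hE : 1 < Real.exp (2 * π * a * n / T) := Real.one_lt_exp_iff.2 (by positivity)
  have hρn : ρ ^ n = (Real.exp (2 * π * a * n / T))⁻¹ := by
    rw [← Real.exp_nat_mul, ← Real.exp_neg]
    ring_nf
  refine h.trans_eq ?_
  rw [hρn]
  field_simp [(sub_pos.2 hE).ne']

theorem trapezoidal_rule_exponential_convergence_general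
    (f : ℂ → ℂ) (a M : ℝ) (ha : 0 < a)
    (hper : ∀ z : ℂ, f (z + 2) = f z)
    (hdiff : DifferentiableOn ℂ f {z : ℂ | |z.im| < a})
    (hbd : ∀ z : ℂ, |z.im| < a → ‖f z‖ ≤ M) :
    ∀ n : ℕ, 1 ≤ n →
      ‖(∫ x in (-1 : ℝ)..1, f x) -
          (2 / n) * ∑ j ∈ Finset.range n, f ((-1 : ℂ) + 2 * j / n)‖
        ≤ 4 * M / (Real.exp (π * a * n) - 1) := by
  intro n hn
  have h := norm_integral_sub_trapezoid_le_of_strip two_pos ha (by exact_mod_cast hper) hdiff hbd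
    (-1) (n := n) (by omega)
  have hnodes : ∀ j : ℕ, ((-1 + j * (2 / n) : ℝ) : ℂ) = -1 + 2 * j / n := fun j => by
    push_cast
    ring
  have hexp : 2 * π * a * n / 2 = π * a * n := by ring
  norm_num [hnodes, hexp] at h
  exact h

/-- Exponential convergence of the trapezoidal rule: if `f` is `2`-periodic and extends to a
bounded analytic function in the strip `{|Im z| < a}` with `|f| ≤ M` there, then the `n`-point
equispaced trapezoidal rule for `∫_{-1}^1 f` has error at most `4M/(e^{πan} - 1)`. -/
theorem trapezoidal_rule_exponential_convergence
    (f : ℂ → ℂ) (a M : ℝ) (ha : 0 < a) (hM : 0 ≤ M)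
    (hper : ∀ z : ℂ, f (z + 2) = f z)
    (hdiff : DifferentiableOn ℂ f {z : ℂ | |z.im| < a})
    (hbd : ∀ z : ℂ, |z.im| < a → ‖f z‖ ≤ M) :
    ∀ n : ℕ, 1 ≤ n →
      ‖(∫ x in (-1 : ℝ)..1, f x) -
          (2 / n) * ∑ j ∈ Finset.range n, f ((-1 : ℂ) + 2 * j / n)‖
        ≤ 4 * M / (Real.exp (π * a * n) - 1) :=
  trapezoidal_rule_exponential_convergence_general f a M ha hper hdiff hbd
end

section
/- For n ≥ 2 equispaced points x_j = −1 + 2j/(n−1), j = 0, ..., n−1, on [−1,1], let ℓ(x) = ∏_{j=0}^{n−1}(x − x_j) be the node polynomial and h = 2/(n−1). Then max_{x∈[−1,1]}|ℓ(x)| ≥ |ℓ(x*)|, where x* is the midpoint of the first subinterval, and |ℓ(x*)| ≥ (h/2)·(h/2)·∏_{j=2}^{n−1}((j−1)h) = (h/2)² h^{n−2} (n−2)!. -/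
open Set Finset

lemma prod_abs_half_ge (n : ℕ) (hn : 2 ≤ n) :
    ((Nat.factorial (n - 2)) : ℝ) / 4 ≤ ∏ j ∈ Finset.range n, |1/2 - (j : ℝ)| := by
  induction n, hn using Nat.le_induction with
  | base => norm_num [Finset.prod_range_succ]
  | succ n hn ih =>
    rw [Finset.prod_range_succ]
    have h2 : (2:ℝ) ≤ (n:ℝ) := by exact_mod_cast hn
    have habs : |1/2 - (n:ℝ)| = (n:ℝ) - 1/2 := by
      rw [abs_of_nonpos (by linarith)]; ring
    have hfac : ((Nat.factorial (n + 1 - 2)) : ℝ)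
        = ((n:ℝ) - 1) * (Nat.factorial (n - 2)) := by
      have h1 : n + 1 - 2 = (n - 2) + 1 := by omega
      rw [h1, Nat.factorial_succ]
      push_cast
      have : ((n - 2 : ℕ) : ℝ) = (n:ℝ) - 2 := by
        have : (2:ℕ) ≤ n := hn
        push_cast [Nat.cast_sub this]
        ring
      rw [this]; ring
    rw [hfac, habs]
    have hP : (0:ℝ) ≤ ∏ j ∈ Finset.range n, |1/2 - (j : ℝ)| :=
      Finset.prod_nonneg fun j _ => abs_nonneg _
    have key : ((n:ℝ) - 1) * ((Nat.factorial (n - 2)) / 4)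
        ≤ ((n:ℝ) - 1/2) * ∏ j ∈ Finset.range n, |1/2 - (j : ℝ)| := by
      apply mul_le_mul (by linarith) ih (by positivity) (by linarith)
    calc ((n:ℝ) - 1) * (Nat.factorial (n - 2)) / 4
        = ((n:ℝ) - 1) * ((Nat.factorial (n - 2)) / 4) := by ring
      _ ≤ ((n:ℝ) - 1/2) * ∏ j ∈ Finset.range n, |1/2 - (j : ℝ)| := key
      _ = (∏ j ∈ Finset.range n, |1/2 - (j : ℝ)|) * ((n:ℝ) - 1/2) := by ring

/-- For `n ≥ 2` equispaced points `xⱼ = -1 + 2j/(n-1)` on `[-1,1]` with spacing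
`h = 2/(n-1)`, the node polynomial `ℓ(x) = ∏ⱼ (x - xⱼ)` evaluated at the midpoint
`x* = -1 + h/2` of the first subinterval satisfies `|ℓ(x*)| ≥ (h/2)² h^{n-2} (n-2)!`,
and hence `max_{[-1,1]} |ℓ| ≥ |ℓ(x*)| ≥ (h/2)² h^{n-2} (n-2)!`. -/
theorem node_polynomial_lower_bound (n : ℕ) (hn : 2 ≤ n) :
    ((2 / ((n : ℝ) - 1)) / 2) ^ 2 * (2 / ((n : ℝ) - 1)) ^ (n - 2) * (Nat.factorial (n - 2))
        ≤ |∏ j ∈ Finset.range n,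
            ((-1 + (2 / ((n : ℝ) - 1)) / 2) - (-1 + 2 * (j : ℝ) / ((n : ℝ) - 1)))| ∧
    |∏ j ∈ Finset.range n,
        ((-1 + (2 / ((n : ℝ) - 1)) / 2) - (-1 + 2 * (j : ℝ) / ((n : ℝ) - 1)))|
      ≤ ⨆ x : Icc (-1 : ℝ) 1,
          |∏ j ∈ Finset.range n, ((x : ℝ) - (-1 + 2 * (j : ℝ) / ((n : ℝ) - 1)))| := by
  have h2 : (2:ℝ) ≤ (n:ℝ) := by exact_mod_cast hn
  have hpos : (0:ℝ) < (n:ℝ) - 1 := by linarith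
  set h : ℝ := 2 / ((n : ℝ) - 1) with hh
  have hhpos : 0 < h := by positivity
  constructor
  · -- lower bound
    have hterm : ∀ j : ℕ,
        ((-1 + h / 2) - (-1 + 2 * (j : ℝ) / ((n : ℝ) - 1))) = h * (1/2 - (j:ℝ)) := by
      intro j
      field_simp [hh]
      have hh1 : h * ((n:ℝ) - 1) = 2 := by rw [hh]; exact div_mul_cancel₀ _ hpos.ne'
      linear_combination (2 * (j:ℝ)) * hh1
    have hprod : |∏ j ∈ Finset.range n,
        ((-1 + h / 2) - (-1 + 2 * (j : ℝ) / ((n : ℝ) - 1)))|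
        = h ^ n * ∏ j ∈ Finset.range n, |1/2 - (j : ℝ)| := by
      rw [Finset.abs_prod]
      simp only [hterm, abs_mul, abs_of_pos hhpos]
      rw [Finset.prod_mul_distrib, Finset.prod_const, Finset.card_range]
    rw [hprod]
    have hle := prod_abs_half_ge n hn
    have hpow : (h/2)^2 * h^(n-2) = h^n / 4 := by
      have hn2 : 2 + (n - 2) = n := by omega
      have : h^n = h^2 * h^(n-2) := by rw [← pow_add, hn2]
      rw [this]; ring
    calc (h/2)^2 * h^(n-2) * (Nat.factorial (n-2))
        = h^n * ((Nat.factorial (n-2)) / 4) := by rw [hpow]; ring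
      _ ≤ h^n * ∏ j ∈ Finset.range n, |1/2 - (j : ℝ)| := by
          apply mul_le_mul_of_nonneg_left hle (by positivity)
  · -- upper bound via sup
    set f : ℝ → ℝ := fun x => |∏ j ∈ Finset.range n, (x - (-1 + 2 * (j : ℝ) / ((n : ℝ) - 1)))|
      with hf
    have hcont : Continuous f := by
      apply Continuous.abs
      exact continuous_finset_prod _ fun j _ => continuous_id.sub continuous_const
    have hmem : (-1 + h / 2) ∈ Icc (-1 : ℝ) 1 := by
      constructor
      · have : 0 < h / 2 := by positivity
        linarith
      · have h1 : h ≤ 2 := by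
          rw [hh, div_le_iff₀ hpos]; linarith
        linarith
    have hbdd : BddAbove (Set.range fun x : Icc (-1:ℝ) 1 => f x) := by
      have : Set.range (fun x : Icc (-1:ℝ) 1 => f x) = f '' (Icc (-1:ℝ) 1) := by
        rw [show (fun x : Icc (-1:ℝ) 1 => f x) = f ∘ Subtype.val from rfl,
          Set.range_comp, Subtype.range_coe]
      rw [this]
      exact (isCompact_Icc.image hcont).bddAbove
    exact le_ciSup hbdd (⟨-1 + h/2, hmem⟩ : Icc (-1:ℝ) 1)
end
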